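/- arXiv:1706.00219 — 2 statements merged into one kernel-verified Lean document; each statement's English description precedes it below -/
import Mathlib

section
/- Fix an integer n ≥ 2. There exists ε_0 > 0 such that for every ε ∈ (0, ε_0) the instance with n demand levels given by v_i = ε^{i−1} and d_i = ((2−ε)/ε)^{i−1} (for i = 1, …, n) satisfies: for every i ∈ {1, …, n} the pair (v_i/2, v_i/2) is a pure Nash equilibrium with total revenue R(v_i) = (2−ε)^{i−1}; moreover SW(v_n) = 2·(2−ε)^{n−1} − 1 and SW(v_1) = R(v_1) = 1. In particular the instance has an equilibrium of welfare 2·(2−ε)^{n−1} − 1 and revenue (2−ε)^{n−1}, as well as an equilibrium of welfare and revenue 1. -/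
open scoped Classical

/-- The demand function induced by an instance with `n` demand levels,
values `v` and demands `d` (indices `1,…,n`):
`demand n v d x = d i` for the largest index `i ∈ {1,…,n}` with `x ≤ v i`,
and `0` if there is no such index. -/
noncomputable def demand (n : ℕ) (v d : ℕ → ℝ) (x : ℝ) : ℝ :=
  if h : ((Finset.Icc 1 n).filter (fun i => x ≤ v i)).Nonempty then
    d (((Finset.Icc 1 n).filter (fun i => x ≤ v i)).max' h)
  else 0

/-- Total revenue at total price `x`. -/
noncomputable def rev (n : ℕ) (v d : ℕ → ℝ) (x : ℝ) : ℝ := x * demand n v d x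

/-- Social welfare at total price `x` (with the convention `d 0 = 0`). -/
noncomputable def welfare (n : ℕ) (v d : ℕ → ℝ) (x : ℝ) : ℝ :=
  ∑ i ∈ (Finset.Icc 1 n).filter (fun i => x ≤ v i),
    v i * (d i - if 1 < i then d (i - 1) else 0)

/-- `InBR n v d q p` : `p` is a best response to the price `q` of the other seller. -/
def InBR (n : ℕ) (v d : ℕ → ℝ) (q p : ℝ) : Prop :=
  0 ≤ p ∧ ∀ p', 0 ≤ p' → p' * demand n v d (p' + q) ≤ p * demand n v d (p + q)

/-- `(p, q)` is a pure Nash equilibrium. -/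
def IsNE (n : ℕ) (v d : ℕ → ℝ) (p q : ℝ) : Prop :=
  0 ≤ p ∧ 0 ≤ q ∧ InBR n v d q p ∧ InBR n v d p q

/-- A valid instance with `n ≥ 2` demand levels: positive values strictly
decreasing in the index, positive demands strictly increasing in the index. -/
def ValidInstance (n : ℕ) (v d : ℕ → ℝ) : Prop :=
  2 ≤ n ∧ 0 < v n ∧ (∀ i j, 1 ≤ i → i < j → j ≤ n → v j < v i) ∧
    0 < d 1 ∧ (∀ i j, 1 ≤ i → i < j → j ≤ n → d i < d j)

/-!
At the total price `v i` the demand is `d i`, so each seller of the split `(v i / 2, v i / 2)`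
earns `(2 - ε) ^ (i - 1) / 2`. A unilateral deviation only moves the total price to some level
`v k`: levels `k > i` are out of reach since `v k ≤ ε v i < v i / 2`, and the best deviation to a
level `k ≤ i` earns `(v k - v i / 2) d k`, which after dividing by `(2 - ε) ^ (k - 1)` becomes
`2 - ε ^ m ≤ (2 - ε) ^ m` with `m = i - k`. The welfare at `v n` telescopes, level `i ≥ 2`
contributing `2 (2 - ε) ^ (i - 1) - 2 (2 - ε) ^ (i - 2)`.
-/

open Finset

section Demand

variable {n : ℕ} {v d : ℕ → ℝ}

lemma demand_eq_of_le_of_forall_lt {x : ℝ} {k : ℕ} (hk : k ∈ Icc 1 n) (hle : x ≤ v k)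
    (hlt : ∀ i ∈ Icc 1 n, k < i → v i < x) : demand n v d x = d k := by
  have hkmem : k ∈ (Icc 1 n).filter (fun i => x ≤ v i) := mem_filter.2 ⟨hk, hle⟩
  rw [demand, dif_pos ⟨k, hkmem⟩]
  congr 1
  refine le_antisymm ?_ (le_max' _ k hkmem)
  obtain ⟨hm, hxm⟩ := mem_filter.1 (max'_mem _ ⟨k, hkmem⟩)
  by_contra! hkm
  exact (hlt _ hm hkm).not_ge hxm

lemma demand_eq_zero_or_exists (x : ℝ) :
    demand n v d x = 0 ∨ ∃ k ∈ Icc 1 n, x ≤ v k ∧ demand n v d x = d k := by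
  unfold demand
  split_ifs with h
  · obtain ⟨hk, hx⟩ := mem_filter.1 (max'_mem _ h)
    exact Or.inr ⟨_, hk, hx, rfl⟩
  · exact Or.inl rfl

lemma demand_nonneg (hd : ∀ k ∈ Icc 1 n, 0 ≤ d k) (x : ℝ) : 0 ≤ demand n v d x := by
  rcases demand_eq_zero_or_exists (v := v) (d := d) x with h | ⟨k, hk, -, h⟩
  · exact h.ge
  · exact h ▸ hd k hk

lemma inBR_of_forall_le {p q : ℝ} (hd : ∀ k ∈ Icc 1 n, 0 ≤ d k) (hp : 0 ≤ p)
    (h : ∀ k ∈ Icc 1 n, q ≤ v k → (v k - q) * d k ≤ p * demand n v d (p + q)) :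
    InBR n v d q p := by
  refine ⟨hp, fun p' hp' => ?_⟩
  rcases demand_eq_zero_or_exists (v := v) (d := d) (p' + q) with h0 | ⟨k, hk, hle, hdk⟩
  · rw [h0, mul_zero]
    exact mul_nonneg hp (demand_nonneg hd _)
  · rw [hdk]
    calc p' * d k ≤ (v k - q) * d k := mul_le_mul_of_nonneg_right (by linarith) (hd k hk)
      _ ≤ p * demand n v d (p + q) := h k hk (by linarith)

lemma demand_value (hv : StrictAntiOn v (Icc 1 n : Set ℕ)) {i : ℕ} (hi : i ∈ Icc 1 n) :
    demand n v d (v i) = d i :=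
  demand_eq_of_le_of_forall_lt hi le_rfl fun _ hj hij => hv hi hj hij

lemma welfare_value_last (hv : AntitoneOn v (Icc 1 n : Set ℕ)) (hn : 1 ≤ n) :
    welfare n v d (v n) = ∑ i ∈ Icc 1 n, v i * (d i - if 1 < i then d (i - 1) else 0) := by
  rw [welfare, filter_true_of_mem]
  intro i hi
  exact hv hi (right_mem_Icc.2 hn) (mem_Icc.1 hi).2

lemma welfare_value_one (hv : StrictAntiOn v (Icc 1 n : Set ℕ)) (hn : 1 ≤ n) :
    welfare n v d (v 1) = v 1 * d 1 := by
  have h1 : 1 ∈ Icc 1 n := left_mem_Icc.2 hn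
  have hfilter : (Icc 1 n).filter (fun i => v 1 ≤ v i) = {1} := by
    ext j
    simp only [mem_filter, mem_singleton]
    constructor
    · rintro ⟨hj, hle⟩
      by_contra hj1
      exact (hv h1 hj (lt_of_le_of_ne (mem_Icc.1 hj).1 (Ne.symm hj1))).not_ge hle
    · rintro rfl
      exact ⟨h1, le_rfl⟩
  rw [welfare, hfilter, sum_singleton, if_neg (lt_irrefl 1), sub_zero]

end Demand

section Geometric

variable {ε : ℝ}

lemma two_sub_pow_le_pow_two_sub (hε0 : 0 ≤ ε) (hε1 : ε ≤ 1) (m : ℕ) :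
    2 - ε ^ m ≤ (2 - ε) ^ m := by
  induction m with
  | zero => norm_num
  | succ m ih =>
    have hεm : ε ^ m ≤ 1 := pow_le_one₀ hε0 hε1
    calc 2 - ε ^ (m + 1) ≤ (2 - ε) * (2 - ε ^ m) := by
          rw [pow_succ]; nlinarith [mul_nonneg (sub_nonneg.2 hε1) (sub_nonneg.2 hεm)]
      _ ≤ (2 - ε) * (2 - ε) ^ m := mul_le_mul_of_nonneg_left ih (by linarith)
      _ = (2 - ε) ^ (m + 1) := (pow_succ' _ _).symm

lemma geometric_deviation_le (hε0 : 0 < ε) (hε1 : ε ≤ 1) {a b : ℕ} (hab : a ≤ b) :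
    (ε ^ a - ε ^ b / 2) * ((2 - ε) / ε) ^ a ≤ ε ^ b / 2 * ((2 - ε) / ε) ^ b := by
  obtain ⟨m, rfl⟩ := Nat.exists_eq_add_of_le hab
  have hε : ε ≠ 0 := hε0.ne'
  have hlhs : (ε ^ a - ε ^ (a + m) / 2) * ((2 - ε) / ε) ^ a
      = (2 - ε) ^ a * (2 - ε ^ m) / 2 := by
    rw [div_pow, pow_add]; field_simp
  have hrhs : ε ^ (a + m) / 2 * ((2 - ε) / ε) ^ (a + m) = (2 - ε) ^ a * (2 - ε) ^ m / 2 := by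
    rw [div_pow, ← pow_add]; field_simp
  rw [hlhs, hrhs]
  gcongr
  · exact pow_nonneg (by linarith) _
  · exact two_sub_pow_le_pow_two_sub hε0.le hε1 m

lemma sum_geometric_welfare (hε : ε ≠ 0) {n : ℕ} (hn : 1 ≤ n) :
    ∑ i ∈ Icc 1 n,
      ε ^ (i - 1) * (((2 - ε) / ε) ^ (i - 1) - if 1 < i then ((2 - ε) / ε) ^ (i - 1 - 1) else 0)
      = 2 * (2 - ε) ^ (n - 1) - 1 := by
  induction n, hn using Nat.le_induction with
  | base => norm_num
  | succ n hn ih =>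
    rw [sum_Icc_succ_top (by omega), ih, if_pos (by omega)]
    obtain ⟨m, rfl⟩ := Nat.exists_eq_add_of_le hn
    simp only [show 1 + m + 1 - 1 = m + 1 by omega, show 1 + m - 1 = m by omega,
      Nat.add_sub_cancel, div_pow]
    field_simp
    ring

variable {n : ℕ} {v d : ℕ → ℝ}
  (hv : ∀ i ∈ Icc 1 n, v i = ε ^ (i - 1)) (hd : ∀ i ∈ Icc 1 n, d i = ((2 - ε) / ε) ^ (i - 1))
include hv

lemma geometric_strictAntiOn (hε0 : 0 < ε) (hε1 : ε < 1) : StrictAntiOn v (Icc 1 n : Set ℕ) := by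
  intro i hi j hj hij
  rw [hv i hi, hv j hj]
  exact pow_lt_pow_right_of_lt_one₀ hε0 hε1 (by simp only [coe_Icc, Set.mem_Icc] at hi; omega)

include hd

lemma geometric_rev_value (hε0 : 0 < ε) (hε1 : ε < 1) {i : ℕ} (hi : i ∈ Icc 1 n) :
    rev n v d (v i) = (2 - ε) ^ (i - 1) := by
  rw [rev, demand_value (geometric_strictAntiOn hv hε0 hε1) hi, hv i hi, hd i hi, ← mul_pow,
    mul_div_cancel₀ _ hε0.ne']

lemma geometric_isNE (hε0 : 0 < ε) (hε : ε < 1 / 2) {i : ℕ} (hi : i ∈ Icc 1 n) :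
    IsNE n v d (v i / 2) (v i / 2) := by
  have hε1 : ε < 1 := by linarith
  have hd0 : ∀ k ∈ Icc 1 n, 0 ≤ d k := fun k hk => by
    rw [hd k hk]; exact pow_nonneg (div_nonneg (by linarith) hε0.le) _
  have hvi : 0 < v i := by rw [hv i hi]; positivity
  have hBR : InBR n v d (v i / 2) (v i / 2) := by
    refine inBR_of_forall_le hd0 (by positivity) fun k hk hle => ?_
    have hki : k ≤ i := by
      by_contra! hik
      have hvk : v k ≤ ε * v i := by
        rw [hv k hk, hv i hi, ← pow_succ']
        exact pow_le_pow_of_le_one hε0.le hε1.le (by have := mem_Icc.1 hi; omega)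
      nlinarith
    rw [add_halves, demand_value (geometric_strictAntiOn hv hε0 hε1) hi, hv k hk, hv i hi,
      hd k hk, hd i hi]
    exact geometric_deviation_le hε0 hε1.le (by omega)
  exact ⟨by positivity, by positivity, hBR, hBR⟩

lemma geometric_welfare_last (hε0 : 0 < ε) (hε1 : ε < 1) (hn : 1 ≤ n) :
    welfare n v d (v n) = 2 * (2 - ε) ^ (n - 1) - 1 := by
  rw [welfare_value_last (geometric_strictAntiOn hv hε0 hε1).antitoneOn hn,
    ← sum_geometric_welfare hε0.ne' hn]
  refine sum_congr rfl fun i hi => ?_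
  have hi' := mem_Icc.1 hi
  split_ifs with h1i
  · rw [hv i hi, hd i hi, hd (i - 1) (mem_Icc.2 ⟨by omega, by omega⟩)]
  · rw [hv i hi, hd i hi]

end Geometric

/-- For the instance `vᵢ = ε^(i-1)`, `dᵢ = ((2-ε)/ε)^(i-1)` with `ε` small
enough: `(vᵢ/2, vᵢ/2)` is a pure Nash equilibrium of revenue `(2-ε)^(i-1)`
for every `i`, the welfare at `v n` is `2(2-ε)^(n-1) - 1`, and the welfare and
revenue at `v 1` are `1`. -/
theorem stmt_11 (n : ℕ) (hn : 2 ≤ n) :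
    ∃ ε₀ : ℝ, 0 < ε₀ ∧ ∀ ε : ℝ, 0 < ε → ε < ε₀ →
      ∀ v d : ℕ → ℝ,
        (∀ i ∈ Finset.Icc 1 n, v i = ε ^ (i - 1)) →
        (∀ i ∈ Finset.Icc 1 n, d i = ((2 - ε) / ε) ^ (i - 1)) →
        (∀ i ∈ Finset.Icc 1 n,
          IsNE n v d (v i / 2) (v i / 2) ∧ rev n v d (v i) = (2 - ε) ^ (i - 1)) ∧
        welfare n v d (v n) = 2 * (2 - ε) ^ (n - 1) - 1 ∧
        welfare n v d (v 1) = 1 ∧ rev n v d (v 1) = 1 := by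
  refine ⟨1 / 2, by norm_num, fun ε hε0 hε v d hv hd => ?_⟩
  have hε1 : ε < 1 := by linarith
  have h1 : 1 ∈ Icc 1 n := left_mem_Icc.2 (by omega)
  have hrev1 : rev n v d (v 1) = 1 := by simpa using geometric_rev_value hv hd hε0 hε1 h1
  refine ⟨fun i hi => ⟨geometric_isNE hv hd hε0 hε hi, geometric_rev_value hv hd hε0 hε1 hi⟩,
    geometric_welfare_last hv hd hε0 hε1 (by omega), ?_, hrev1⟩
  rw [welfare_value_one (geometric_strictAntiOn hv hε0 hε1) (by omega), ← hrev1, rev,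
    demand_value (geometric_strictAntiOn hv hε0 hε1) h1]
end

section
/- Let v and v' be reals with 0 < v < v' ≤ v_1. If v' − v/2 ∈ BR(v/2) (the best reply to the price v/2 has total price v' > v), then v·√(𝒟(v)) ≤ v'·√(𝒟(v')); equivalently, (R(v'))²·𝒟(v) ≥ (R(v))²·𝒟(v'), i.e. v ≤ v'·√(𝒟(v')/𝒟(v)). -/
open scoped Classical

/-!
Deviating to the price `a / 2` against `a / 2` is one of the options of the best reply, so
`(a / 2) 𝒟(a) ≤ (a' - a / 2) 𝒟(a')`. Multiplying by `2a` and using `2aa' - a² ≤ a'²` gives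
`a² 𝒟(a) ≤ a'² 𝒟(a')`; all three inequalities are reformulations of this one, since both
demands are positive as `a < a' ≤ v₁`.
-/

lemma ValidInstance.d_pos {n : ℕ} {v d : ℕ → ℝ} (h : ValidInstance n v d) :
    ∀ i, 1 ≤ i → i ≤ n → 0 < d i := by
  obtain ⟨-, -, -, hd1, hd⟩ := h
  intro i hi hin
  rcases hi.eq_or_lt with rfl | hi
  · exact hd1
  · exact hd1.trans (hd 1 i le_rfl hi hin)

lemma demand_pos_of_le {n : ℕ} {v d : ℕ → ℝ} (hn : 1 ≤ n)
    (hd : ∀ i, 1 ≤ i → i ≤ n → 0 < d i) {x : ℝ} (hx : x ≤ v 1) : 0 < demand n v d x := by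
  have hne : ((Finset.Icc 1 n).filter (fun i => x ≤ v i)).Nonempty :=
    ⟨1, Finset.mem_filter.mpr ⟨Finset.mem_Icc.mpr ⟨le_rfl, hn⟩, hx⟩⟩
  rw [demand, dif_pos hne]
  obtain ⟨hmax, -⟩ := Finset.mem_filter.mp (Finset.max'_mem _ hne)
  exact hd _ (Finset.mem_Icc.mp hmax).1 (Finset.mem_Icc.mp hmax).2

lemma sq_mul_demand_le_of_inBR {n : ℕ} {v d : ℕ → ℝ} {a a' : ℝ} (ha : 0 ≤ a)
    (hD' : 0 ≤ demand n v d a') (hbr : InBR n v d (a / 2) (a' - a / 2)) :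
    a ^ 2 * demand n v d a ≤ a' ^ 2 * demand n v d a' := by
  have hdev := hbr.2 (a / 2) (by positivity)
  rw [add_halves, sub_add_cancel] at hdev
  nlinarith [mul_le_mul_of_nonneg_left hdev (by positivity : (0 : ℝ) ≤ 2 * a),
    mul_nonneg (sq_nonneg (a' - a)) hD']

lemma mul_sqrt_le_mul_sqrt_of_sq_mul_le {x y s t : ℝ} (hx : 0 ≤ x) (hy : 0 ≤ y)
    (h : x ^ 2 * s ≤ y ^ 2 * t) : x * √s ≤ y * √t := by
  have := Real.sqrt_le_sqrt h
  rwa [Real.sqrt_mul (sq_nonneg x), Real.sqrt_mul (sq_nonneg y),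
    Real.sqrt_sq hx, Real.sqrt_sq hy] at this

/-- If the best reply to `a/2` has total price `a' > a`, then
`a·√(𝒟(a)) ≤ a'·√(𝒟(a'))`; equivalently `(R a')²·𝒟(a) ≥ (R a)²·𝒟(a')`,
i.e. `a ≤ a'·√(𝒟(a')/𝒟(a))`. -/
theorem stmt_13 (n : ℕ) (v d : ℕ → ℝ) (h : ValidInstance n v d)
    (a a' : ℝ) (ha : 0 < a) (haa' : a < a') (ha' : a' ≤ v 1)
    (hbr : InBR n v d (a / 2) (a' - a / 2)) :
    a * Real.sqrt (demand n v d a) ≤ a' * Real.sqrt (demand n v d a') ∧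
    (rev n v d a) ^ 2 * demand n v d a' ≤ (rev n v d a') ^ 2 * demand n v d a ∧
    a ≤ a' * Real.sqrt (demand n v d a' / demand n v d a) := by
  have hn : 1 ≤ n := le_trans (by norm_num) h.1
  have hD : 0 < demand n v d a := demand_pos_of_le hn h.d_pos (haa'.le.trans ha')
  have hD' : 0 < demand n v d a' := demand_pos_of_le hn h.d_pos ha'
  have key := sq_mul_demand_le_of_inBR ha.le hD'.le hbr
  have hsqrt := mul_sqrt_le_mul_sqrt_of_sq_mul_le ha.le (ha.trans haa').le key
  refine ⟨hsqrt, ?_, ?_⟩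
  · calc (rev n v d a) ^ 2 * demand n v d a'
        = a ^ 2 * demand n v d a * (demand n v d a * demand n v d a') := by rw [rev]; ring
      _ ≤ a' ^ 2 * demand n v d a' * (demand n v d a * demand n v d a') := by gcongr
      _ = (rev n v d a') ^ 2 * demand n v d a := by rw [rev]; ring
  · rw [Real.sqrt_div hD'.le, ← mul_div_assoc, le_div_iff₀ (Real.sqrt_pos.mpr hD)]
    exact hsqrt
end
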